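/- arXiv:1608.00412 — 5 statements merged into one kernel-verified Lean document; each statement's English description precedes it below -/
import Mathlib

section
/- Let g be a finite-dimensional Lie algebra over a ring R ⊇ ℚ, free as an R-module, and let r ∈ Λ²g be strongly non-degenerate with inverse ω ∈ Λ²g*. Then there exists a torsion-free covariant derivative ∇: g × g → g (i.e. ∇_X Y − ∇_Y X − [X,Y] = 0) such that ω(∇_X Y, Z) + ω(Y, ∇_X Z) = 0 for all X, Y, Z ∈ g (equivalently ∇_X ω = 0). Explicitly, one may take ∇ determined by ω(∇_X Y, Z) = ω(½[X,Y], Z) + (1/3)(∇̃_X ω)(Y,Z) + (1/3)(∇̃_Y ω)(X,Z) where ∇̃_X Y = ½[X,Y]. -/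
/-!
STATEMENT 1 (algebraic Hess trick): Let `g` be a Lie algebra over a commutative
ring `R ⊇ ℚ`, free and finite-dimensional as an `R`-module, and let
`ω ∈ Λ²g*` be the (strongly non-degenerate) inverse of an r-matrix `r ∈ Λ²g`;
being the inverse of an r-matrix, `ω` is a Chevalley-Eilenberg 2-cocycle.
Then there exists a torsion-free covariant derivative `∇ : g × g → g`
(bilinear, `∇_X Y - ∇_Y X = [X,Y]`) which is symplectic:
`ω(∇_X Y, Z) + ω(Y, ∇_X Z) = 0`.  Explicitly one may take `∇` determined by
`ω(∇_X Y, Z) = ω(½[X,Y], Z) + ⅓(∇̃_X ω)(Y,Z) + ⅓(∇̃_Y ω)(X,Z)` with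
`∇̃_X Y = ½[X,Y]`, which after clearing denominators reads
`6·ω(∇_X Y, Z) = 3·ω([X,Y],Z) - ω(Y,[X,Z]) - ω(X,[Y,Z])`.
-/

theorem algebraic_hess_trick
    (R : Type*) [CommRing R] [Algebra ℚ R]
    (g : Type*) [LieRing g] [LieAlgebra R g]
    [Module.Free R g] [Module.Finite R g]
    (ω : g →ₗ[R] g →ₗ[R] R)
    -- ω is a two-form (antisymmetric)
    (halt : ∀ x y : g, ω x y = - ω y x)
    -- ω is strongly non-degenerate: the musical map ♭ : g → g* is bijective
    (hnd : Function.Bijective fun x : g => ω x)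
    -- ω is δ_CE-closed (equivalent to [r,r] = 0 for the inverse r-matrix)
    (hclosed : ∀ x y z : g, - ω ⁅x, y⁆ z + ω ⁅x, z⁆ y - ω ⁅y, z⁆ x = 0) :
    ∃ nabla : g →ₗ[R] g →ₗ[R] g,
      -- torsion-free
      (∀ x y : g, nabla x y - nabla y x = ⁅x, y⁆) ∧
      -- symplectic: ∇ ω = 0
      (∀ x y z : g, ω (nabla x y) z + ω y (nabla x z) = 0) ∧
      -- the explicit Hess formula
      (∀ x y z : g, (6 : R) * ω (nabla x y) z
          = 3 * ω ⁅x, y⁆ z - ω y ⁅x, z⁆ - ω x ⁅y, z⁆) := by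
  classical
  set c : R := algebraMap ℚ R (1/6) with hc
  have hc6 : (6 : R) * c = 1 := by
    have h6 : (6 : R) = algebraMap ℚ R 6 := (map_ofNat (algebraMap ℚ R) 6).symm
    rw [h6, hc, ← map_mul]
    norm_num
  let e : g ≃ₗ[R] (g →ₗ[R] R) := LinearEquiv.ofBijective ω hnd
  let f : g → g → (g →ₗ[R] R) := fun x y =>
    c • ((3:R) • ω ⁅x, y⁆ - (ω y).comp (LieAlgebra.ad R g x)
        - (ω x).comp (LieAlgebra.ad R g y))
  have hf : ∀ x y z : g, f x y z = c * (3 * ω ⁅x,y⁆ z - ω y ⁅x,z⁆ - ω x ⁅y,z⁆) := by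
    intro x y z
    simp [f, LieAlgebra.ad_apply, smul_eq_mul, mul_sub, mul_assoc]
  let nabla : g →ₗ[R] g →ₗ[R] g := LinearMap.mk₂ R (fun x y => e.symm (f x y))
    (by
      intro x x' y
      rw [← map_add]
      refine congrArg (⇑e.symm) ?_
      ext z
      simp only [hf, LinearMap.add_apply, add_lie, map_add, lie_add,
        LinearMap.map_add]
      ring)
    (by
      intro a x y
      rw [← map_smul]
      refine congrArg (⇑e.symm) ?_
      ext z
      simp only [hf, LinearMap.smul_apply, smul_lie, lie_smul, map_smul,
        smul_eq_mul]
      ring)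
    (by
      intro x y y'
      rw [← map_add]
      refine congrArg (⇑e.symm) ?_
      ext z
      simp only [hf, LinearMap.add_apply, add_lie, map_add, lie_add,
        LinearMap.map_add]
      ring)
    (by
      intro a x y
      rw [← map_smul]
      refine congrArg (⇑e.symm) ?_
      ext z
      simp only [hf, LinearMap.smul_apply, smul_lie, lie_smul, map_smul,
        smul_eq_mul]
      ring)
  have key : ∀ x y z : g, ω (nabla x y) z
      = c * (3 * ω ⁅x,y⁆ z - ω y ⁅x,z⁆ - ω x ⁅y,z⁆) := by
    intro x y z
    have h1 : ω (e.symm (f x y)) = f x y := e.apply_symm_apply (f x y)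
    have : nabla x y = e.symm (f x y) := rfl
    rw [this, h1, hf]
  refine ⟨nabla, ?_, ?_, ?_⟩
  · intro x y
    refine hnd.injective ?_
    show ω (nabla x y - nabla y x) = ω ⁅x, y⁆
    ext z
    simp only [map_sub, LinearMap.sub_apply]
    rw [key x y z, key y x z]
    have hyx : ω ⁅y,x⁆ z = - ω ⁅x,y⁆ z := by
      have h : ⁅y,x⁆ = -⁅x,y⁆ := by rw [← lie_skew x y]; simp
      rw [h, map_neg, LinearMap.neg_apply]
    rw [hyx]
    linear_combination (ω ⁅x,y⁆ z) * hc6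
  · intro x y z
    rw [halt y (nabla x z), key x y z, key x z y]
    have h1 : ω y ⁅x,z⁆ = - ω ⁅x,z⁆ y := halt y ⁅x,z⁆
    have h2 : ω z ⁅x,y⁆ = - ω ⁅x,y⁆ z := halt z ⁅x,y⁆
    have h3 : ω x ⁅z,y⁆ = - ω x ⁅y,z⁆ := by
      have h : ⁅z,y⁆ = -⁅y,z⁆ := by rw [← lie_skew y z]; simp
      rw [h, map_neg]
    have h4 : ω x ⁅y,z⁆ = - ω ⁅y,z⁆ x := halt x ⁅y,z⁆
    rw [h1, h2, h3, h4]
    linear_combination (-2*c) * hclosed x y z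
  · intro x y z
    rw [key x y z, ← mul_assoc, hc6, one_mul]
end

section
/- Let g be a finite-dimensional Lie algebra over a field of characteristic zero, and let r ∈ Λ²g be non-degenerate with inverse ω ∈ Λ²g*. Then the Schouten bracket condition [r,r] = 0 holds if and only if ω is closed with respect to the Chevalley-Eilenberg differential, i.e. δ_CE ω = 0. -/
/-!
STATEMENT 2: For a finite-dimensional Lie algebra `g` over a field of characteristic
zero and a non-degenerate `r ∈ Λ²g` (encoded via the musical isomorphism
`♯ : g* ≃ g`, `α ↦ (α ⊗ id)(r)`, which is antisymmetric), the Schouten bracket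
condition `[r,r] = 0` (expressed through the standard formula
`½[r,r](α,β,γ) = α([♯β,♯γ]) + β([♯γ,♯α]) + γ([♯α,♯β])`) holds if and only if the
inverse two-form `ω(x,y) := (♯⁻¹ x)(y)` is Chevalley-Eilenberg closed.
-/

theorem schouten_zero_iff_ce_closed
    (k : Type*) [Field k] [CharZero k]
    (g : Type*) [LieRing g] [LieAlgebra k g] [FiniteDimensional k g]
    (sharp : Module.Dual k g ≃ₗ[k] g)
    (hskew : ∀ α β : Module.Dual k g, α (sharp β) = - β (sharp α))
    (ω : g → g → k) (hω : ∀ x y : g, ω x y = (sharp.symm x) y) :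
    (∀ α β γ : Module.Dual k g,
        α ⁅sharp β, sharp γ⁆ + β ⁅sharp γ, sharp α⁆ + γ ⁅sharp α, sharp β⁆ = 0)
      ↔
    (∀ x y z : g, - ω ⁅x, y⁆ z + ω ⁅x, z⁆ y - ω ⁅y, z⁆ x = 0) := by
  have key : ∀ u v : g, ω u v = - (sharp.symm v) u := by
    intro u v
    rw [hω]
    have := hskew (sharp.symm u) (sharp.symm v)
    simpa using this
  constructor
  · intro h x y z
    have h' := h (sharp.symm x) (sharp.symm y) (sharp.symm z)
    simp only [LinearEquiv.apply_symm_apply] at h'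
    rw [key, key, key]
    have e : (sharp.symm y) ⁅x, z⁆ = - (sharp.symm y) ⁅z, x⁆ := by
      rw [← lie_skew, map_neg]
    linear_combination h' - e
  · intro h α β γ
    have h' := h (sharp α) (sharp β) (sharp γ)
    rw [key, key, key] at h'
    simp only [LinearEquiv.symm_apply_apply] at h'
    have e : β ⁅sharp α, sharp γ⁆ = - β ⁅sharp γ, sharp α⁆ := by
      rw [← lie_skew, map_neg]
    linear_combination h' + e
end

section
/- Let g be a Lie algebra over a commutative ring R ⊇ ℚ, free and finite-dimensional, and let ∇ be a torsion-free covariant derivative on g. Then for all α ∈ Λ^•g* one has Σ_i e^i ∧ ∇_{e_i} α = δ_CE α, where δ_CE is the Chevalley-Eilenberg differential, e_1,…,e_n is a basis of g and e^1,…,e^n its dual basis. -/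
section Aux
variable {R : Type*} [CommRing R] {g : Type*} [AddCommGroup g] [Module R g]

lemma val_succAbove' {n : ℕ} (p : Fin (n+1)) (c : Fin n) :
    ((p.succAbove c : Fin (n+1)) : ℕ) = if (c:ℕ) < (p:ℕ) then (c:ℕ) else (c:ℕ)+1 := by
  rcases lt_or_ge (Fin.castSucc c) p with h | h
  · rw [Fin.succAbove_of_castSucc_lt _ _ h]
    have : (c:ℕ) < (p:ℕ) := h
    simp [this]
  · rw [Fin.succAbove_of_le_castSucc _ _ h]
    have : ¬ (c:ℕ) < (p:ℕ) := not_lt.mpr h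
    simp [Fin.val_succ, this]

lemma update_eq_comp_cycleRange {M : Type*} {n : ℕ} (f : Fin (n+1) → M) (k : Fin (n+1)) (v : M) :
    Function.update f k v = (Fin.cons v (fun l => f (k.succAbove l))) ∘ (Fin.cycleRange k) := by
  funext j
  rcases lt_trichotomy j k with h | h | h
  · rw [Function.update_of_ne (ne_of_lt h), Function.comp_apply, Fin.cycleRange_of_lt h]
    have hj : (j:ℕ) < n := lt_of_lt_of_le h (Nat.lt_succ_iff.mp k.isLt)
    have h1 : (j + 1 : Fin (n+1)) = Fin.succ ⟨(j:ℕ), hj⟩ := by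
      ext
      rw [Fin.val_add_one_of_lt (lt_of_lt_of_le h (Fin.le_last k))]
      simp
    rw [h1, Fin.cons_succ]
    show f j = f (k.succAbove _)
    congr 1
    rw [Fin.succAbove_of_castSucc_lt]
    · ext; rfl
    · rw [Fin.lt_def]; exact h
  · subst h; rw [Function.update_self, Function.comp_apply, Fin.cycleRange_self, Fin.cons_zero]
  · rw [Function.update_of_ne (ne_of_gt h), Function.comp_apply, Fin.cycleRange_of_gt h]
    have hj : 0 < (j:ℕ) := lt_of_le_of_lt (Nat.zero_le _) h
    have hj2 : (j:ℕ) - 1 < n := by have := j.isLt; omega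
    have hc : j = Fin.succ ⟨(j:ℕ)-1, hj2⟩ := by ext; simp; omega
    rw [hc, Fin.cons_succ]
    show f _ = f (k.succAbove _)
    congr 1
    rw [Fin.succAbove_of_le_castSucc]
    simp [Fin.le_def]
    have : (k:ℕ) < (j:ℕ) := h
    omega

lemma map_update_eq_smul_cons {n : ℕ} (α : g [⋀^Fin (n+1)]→ₗ[R] R)
    (f : Fin (n+1) → g) (k : Fin (n+1)) (v : g) :
    α (Function.update f k v) =
      (-1:R)^(k:ℕ) • α (Fin.cons v (fun l => f (k.succAbove l))) := by
  rw [update_eq_comp_cycleRange, AlternatingMap.map_perm, Fin.sign_cycleRange]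
  rcases Nat.even_or_odd (k:ℕ) with h | h
  · rw [Even.neg_one_pow h, Even.neg_one_pow h, one_smul, one_smul]
  · rw [Odd.neg_one_pow h, Odd.neg_one_pow h, Units.smul_def]
    simp

lemma tail_symm {g : Type*} {m : ℕ} (X : Fin (m+2) → g) (a b : Fin (m+2))
    (hab : (a:ℕ) < (b:ℕ)) (ha : (a:ℕ) < m+1) (hb : (b:ℕ)-1 < m+1) (l : Fin m) :
    X (b.succAbove ((⟨(a:ℕ), ha⟩ : Fin (m+1)).succAbove l)) =
      X (a.succAbove ((⟨(b:ℕ)-1, hb⟩ : Fin (m+1)).succAbove l)) := by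
  congr 1
  rw [Fin.ext_iff]
  rw [val_succAbove', val_succAbove', val_succAbove', val_succAbove']
  have hl := l.isLt
  simp only [Fin.val_mk]
  split_ifs <;> omega

noncomputable def Dmap {m : ℕ} (nabla : g →ₗ[R] g →ₗ[R] g)
    (α : g [⋀^Fin (m+1)]→ₗ[R] R) (X : Fin (m+2) → g) (j i : Fin (m+2)) : R :=
  if hij : (i:ℕ) < (j:ℕ) then
    -((-1:R)^((i:ℕ)+(j:ℕ)) • α (Fin.cons (nabla (X j) (X i))
      (fun l => X (j.succAbove
        ((⟨(i:ℕ), lt_of_lt_of_le hij (Nat.lt_succ_iff.mp j.isLt)⟩ : Fin (m+1)).succAbove l)))))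
  else if hji : (j:ℕ) < (i:ℕ) then
    (-1:R)^((i:ℕ)+(j:ℕ)) • α (Fin.cons (nabla (X j) (X i))
      (fun l => X (i.succAbove
        ((⟨(j:ℕ), lt_of_lt_of_le hji (Nat.lt_succ_iff.mp i.isLt)⟩ : Fin (m+1)).succAbove l))))
  else 0

lemma Dmap_lt {m : ℕ} (nabla : g →ₗ[R] g →ₗ[R] g)
    (α : g [⋀^Fin (m+1)]→ₗ[R] R) (X : Fin (m+2) → g) {j i : Fin (m+2)}
    (h : (i:ℕ) < (j:ℕ)) :
    Dmap nabla α X j i =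
      -((-1:R)^((i:ℕ)+(j:ℕ)) • α (Fin.cons (nabla (X j) (X i))
        (fun l => X (j.succAbove
          ((⟨(i:ℕ), lt_of_lt_of_le h (Nat.lt_succ_iff.mp j.isLt)⟩ : Fin (m+1)).succAbove l))))) := by
  rw [Dmap, dif_pos h]

lemma Dmap_gt {m : ℕ} (nabla : g →ₗ[R] g →ₗ[R] g)
    (α : g [⋀^Fin (m+1)]→ₗ[R] R) (X : Fin (m+2) → g) {j i : Fin (m+2)}
    (h : (j:ℕ) < (i:ℕ)) :
    Dmap nabla α X j i =
      (-1:R)^((i:ℕ)+(j:ℕ)) • α (Fin.cons (nabla (X j) (X i))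
        (fun l => X (i.succAbove
          ((⟨(j:ℕ), lt_of_lt_of_le h (Nat.lt_succ_iff.mp i.isLt)⟩ : Fin (m+1)).succAbove l)))) := by
  rw [Dmap, dif_neg (by omega), dif_pos h]

lemma Dmap_diag {m : ℕ} (nabla : g →ₗ[R] g →ₗ[R] g)
    (α : g [⋀^Fin (m+1)]→ₗ[R] R) (X : Fin (m+2) → g) (j : Fin (m+2)) :
    Dmap nabla α X j j = 0 := by
  rw [Dmap, dif_neg (by omega), dif_neg (by omega)]

end Aux

theorem wedge_nabla_eq_chevalleyEilenberg
    (R : Type*) [CommRing R] [Algebra ℚ R]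
    (g : Type*) [LieRing g] [LieAlgebra R g]
    [Module.Free R g] [Module.Finite R g]
    (nabla : g →ₗ[R] g →ₗ[R] g)
    (htf : ∀ x y : g, nabla x y - nabla y x = ⁅x, y⁆)
    (m : ℕ) (α : g [⋀^Fin (m + 1)]→ₗ[R] R) (X : Fin (m + 2) → g) :
    -- LHS : Σ_j (-1)^j (∇_{X_j} α)(X ∘ succAbove j)
    (∑ j : Fin (m + 2), (-1 : R) ^ (j : ℕ) •
      (- ∑ k : Fin (m + 1),
          α (Function.update (fun l => X (j.succAbove l)) k
              (nabla (X j) (X (j.succAbove k))))))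
    =
    -- RHS : Σ_{i<j} (-1)^{i+j} α([X_i, X_j], X with i, j removed)
    (∑ j : Fin (m + 2), ∑ i : Fin (m + 2),
      if h : (i : ℕ) < (j : ℕ) then
        (-1 : R) ^ ((i : ℕ) + (j : ℕ)) •
          α (Fin.cons ⁅X i, X j⁆
              (fun l : Fin m =>
                X (j.succAbove ((Fin.mk (i : ℕ) (by omega) : Fin (m + 1)).succAbove l))))
      else 0) := by
  classical
  have hE : ∀ (j : Fin (m+2)) (k : Fin (m+1)),
      Dmap nabla α X j (j.succAbove k) =
        -((-1:R)^(j:ℕ) •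
          α (Function.update (fun l => X (j.succAbove l)) k (nabla (X j) (X (j.succAbove k))))) := by
    intro j k
    rw [map_update_eq_smul_cons]
    have hiv := val_succAbove' j k
    by_cases h : (k:ℕ) < (j:ℕ)
    · have hiv' : ((j.succAbove k : Fin (m+2)) : ℕ) = (k:ℕ) := by rw [hiv, if_pos h]
      have hpos : ((j.succAbove k : Fin (m+2)) : ℕ) < (j:ℕ) := by rw [hiv']; exact h
      rw [Dmap_lt nabla α X hpos]
      have hmk : (⟨((j.succAbove k : Fin (m+2)):ℕ),
          lt_of_lt_of_le hpos (Nat.lt_succ_iff.mp j.isLt)⟩ : Fin (m+1)) = k := Fin.ext hiv'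
      rw [hmk, hiv', smul_smul, ← pow_add, Nat.add_comm (j:ℕ) (k:ℕ)]
    · have hjk : (j:ℕ) ≤ (k:ℕ) := not_lt.mp h
      have hiv' : ((j.succAbove k : Fin (m+2)) : ℕ) = (k:ℕ)+1 := by rw [hiv, if_neg h]
      have hpos : (j:ℕ) < ((j.succAbove k : Fin (m+2)) : ℕ) := by rw [hiv']; omega
      rw [Dmap_gt nabla α X hpos]
      have hb : ((j.succAbove k : Fin (m+2)):ℕ) - 1 < m + 1 := by
        have := k.isLt; omega
      have ht : ∀ l : Fin m,
          X ((j.succAbove k).succAbove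
            ((⟨(j:ℕ), lt_of_lt_of_le hpos (Nat.lt_succ_iff.mp (j.succAbove k).isLt)⟩ :
              Fin (m+1)).succAbove l)) = X (j.succAbove (k.succAbove l)) := by
        intro l
        rw [tail_symm X j (j.succAbove k) hpos _ hb l]
        congr 1
        rw [Fin.ext_iff]
        simp only [val_succAbove', Fin.val_mk]
        split_ifs <;> omega
      have hfun : (fun l => X ((j.succAbove k).succAbove
            ((⟨(j:ℕ), lt_of_lt_of_le hpos (Nat.lt_succ_iff.mp (j.succAbove k).isLt)⟩ :
              Fin (m+1)).succAbove l))) = fun l => X (j.succAbove (k.succAbove l)) :=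
        funext ht
      rw [hfun, hiv', smul_smul, ← pow_add,
        show (k:ℕ)+1+(j:ℕ) = ((j:ℕ)+(k:ℕ))+1 by omega, pow_succ, mul_neg_one, neg_smul]
  have hC1 : (∑ j : Fin (m + 2), (-1 : R) ^ (j : ℕ) •
      (- ∑ k : Fin (m + 1),
          α (Function.update (fun l => X (j.succAbove l)) k
              (nabla (X j) (X (j.succAbove k)))))) =
      ∑ j : Fin (m+2), ∑ i : Fin (m+2), Dmap nabla α X j i := by
    refine Finset.sum_congr rfl fun j _ => ?_
    rw [Fin.sum_univ_succAbove (fun i => Dmap nabla α X j i) j, Dmap_diag, zero_add]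
    rw [smul_neg, Finset.smul_sum]
    rw [← Finset.sum_neg_distrib]
    exact (Finset.sum_congr rfl fun k _ => (hE j k)).symm
  rw [hC1]
  -- split the double sum
  have hsplit : ∀ j i : Fin (m+2), Dmap nabla α X j i =
      (if (i:ℕ) < (j:ℕ) then Dmap nabla α X j i else 0) +
      (if (j:ℕ) < (i:ℕ) then Dmap nabla α X j i else 0) := by
    intro j i
    rcases lt_trichotomy (i:ℕ) (j:ℕ) with h|h|h
    · rw [if_pos h, if_neg (by omega), add_zero]
    · rw [if_neg (by omega), if_neg (by omega), add_zero,
        show i = j from Fin.ext h, Dmap_diag]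
    · rw [if_neg (by omega), zero_add, if_pos h]
  calc ∑ j : Fin (m+2), ∑ i : Fin (m+2), Dmap nabla α X j i
      = ∑ j : Fin (m+2), ∑ i : Fin (m+2),
          ((if (i:ℕ) < (j:ℕ) then Dmap nabla α X j i else 0) +
           (if (j:ℕ) < (i:ℕ) then Dmap nabla α X j i else 0)) := by
        exact Finset.sum_congr rfl fun j _ => Finset.sum_congr rfl fun i _ => hsplit j i
    _ = (∑ j : Fin (m+2), ∑ i : Fin (m+2), (if (i:ℕ) < (j:ℕ) then Dmap nabla α X j i else 0)) +
        (∑ j : Fin (m+2), ∑ i : Fin (m+2), (if (j:ℕ) < (i:ℕ) then Dmap nabla α X j i else 0)) := by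
        rw [← Finset.sum_add_distrib]
        exact Finset.sum_congr rfl fun j _ => Finset.sum_add_distrib
    _ = (∑ j : Fin (m+2), ∑ i : Fin (m+2), (if (i:ℕ) < (j:ℕ) then Dmap nabla α X j i else 0)) +
        (∑ j : Fin (m+2), ∑ i : Fin (m+2), (if (i:ℕ) < (j:ℕ) then Dmap nabla α X i j else 0)) := by
        congr 1
        exact Finset.sum_comm
    _ = ∑ j : Fin (m+2), ∑ i : Fin (m+2),
          (if (i:ℕ) < (j:ℕ) then Dmap nabla α X j i + Dmap nabla α X i j else 0) := by
        rw [← Finset.sum_add_distrib]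
        refine Finset.sum_congr rfl fun j _ => ?_
        rw [← Finset.sum_add_distrib]
        refine Finset.sum_congr rfl fun i _ => ?_
        split_ifs <;> simp
    _ = _ := by
        refine Finset.sum_congr rfl fun j _ => Finset.sum_congr rfl fun i _ => ?_
        by_cases h : (i:ℕ) < (j:ℕ)
        · rw [if_pos h, dif_pos h, Dmap_lt nabla α X h, Dmap_gt nabla α X h]
          have hsub : α (Fin.cons ⁅X i, X j⁆
              (fun l => X (j.succAbove
                ((⟨(i:ℕ), lt_of_lt_of_le h (Nat.lt_succ_iff.mp j.isLt)⟩ :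
                  Fin (m+1)).succAbove l)))) =
              α (Fin.cons (nabla (X i) (X j))
                (fun l => X (j.succAbove
                  ((⟨(i:ℕ), lt_of_lt_of_le h (Nat.lt_succ_iff.mp j.isLt)⟩ :
                    Fin (m+1)).succAbove l)))) -
              α (Fin.cons (nabla (X j) (X i))
                (fun l => X (j.succAbove
                  ((⟨(i:ℕ), lt_of_lt_of_le h (Nat.lt_succ_iff.mp j.isLt)⟩ :
                    Fin (m+1)).succAbove l)))) := by
            rw [← htf]
            rw [show (Fin.cons (nabla (X i) (X j) - nabla (X j) (X i))
                (fun l => X (j.succAbove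
                  ((⟨(i:ℕ), lt_of_lt_of_le h (Nat.lt_succ_iff.mp j.isLt)⟩ :
                    Fin (m+1)).succAbove l))) : Fin (m+1) → g) =
                Function.update (Fin.cons (nabla (X i) (X j))
                  (fun l => X (j.succAbove
                    ((⟨(i:ℕ), lt_of_lt_of_le h (Nat.lt_succ_iff.mp j.isLt)⟩ :
                      Fin (m+1)).succAbove l)))) 0
                  (nabla (X i) (X j) - nabla (X j) (X i))
              from (Fin.update_cons_zero _ _ _).symm]
            rw [AlternatingMap.map_update_sub, Fin.update_cons_zero, Fin.update_cons_zero]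
          rw [hsub, Nat.add_comm (j:ℕ) (i:ℕ), smul_sub]
          ring
        · rw [if_neg h, dif_neg h]
end

section
/- Let r ∈ Λ²g be a classical r-matrix on a Lie algebra g over a field. Then g_r = { (α ⊗ id)(r) : α ∈ g* } is a Lie subalgebra of g. -/
open TensorProduct

/-!
STATEMENT 5: If `r ∈ Λ²g` is a classical r-matrix on a (finite-dimensional) Lie
algebra over a field, then `g_r = {(α ⊗ id)(r) : α ∈ g*}` is a Lie subalgebra of
`g`.  We encode `r` by the induced map `♯ : g* → g`, `α ↦ (α ⊗ id)(r)`, which is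
antisymmetric (`α(♯β) = -β(♯α)`), and the Schouten condition `[r,r] = 0` by the
standard formula `½[r,r](α,β,γ) = α([♯β,♯γ]) + β([♯γ,♯α]) + γ([♯α,♯β]) = 0`.
The conclusion is that the image `g_r = range ♯` is closed under the Lie bracket.
-/

theorem rMatrix_image_is_lie_subalgebra
    (k : Type*) [Field k]
    (g : Type*) [LieRing g] [LieAlgebra k g] [FiniteDimensional k g]
    (sharp : Module.Dual k g →ₗ[k] g)
    (hskew : ∀ α β : Module.Dual k g, α (sharp β) = - β (sharp α))
    (hCYBE : ∀ α β γ : Module.Dual k g,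
        α ⁅sharp β, sharp γ⁆ + β ⁅sharp γ, sharp α⁆ + γ ⁅sharp α, sharp β⁆ = 0) :
    ∀ x y : g, x ∈ LinearMap.range sharp → y ∈ LinearMap.range sharp →
      ⁅x, y⁆ ∈ LinearMap.range sharp := by
  rintro x y ⟨α, rfl⟩ ⟨β, rfl⟩
  refine ⟨α ∘ₗ LieAlgebra.ad k g (sharp β) - β ∘ₗ LieAlgebra.ad k g (sharp α), ?_⟩
  rw [← sub_eq_zero, ← Module.forall_dual_apply_eq_zero_iff k]
  intro γ
  have h1 := hskew γ (α ∘ₗ LieAlgebra.ad k g (sharp β) - β ∘ₗ LieAlgebra.ad k g (sharp α))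
  have h2 := hCYBE α β γ
  have h3 : β ⁅sharp γ, sharp α⁆ = - β ⁅sharp α, sharp γ⁆ := by
    rw [← lie_skew, map_neg]
  simp only [LinearMap.sub_apply, LinearMap.comp_apply, LieAlgebra.ad_apply, map_sub] at *
  linear_combination h1 - h2 + h3
end

section
/- Let F, F' ∈ (U(g)⊗U(g))[[t]] be two Drinfel'd twists that coincide up to and including order k in t. Then ∂(F_{k+1} − F'_{k+1}) = 0, where ∂ is the differential ∂ξ = ξ⊗1 + 1⊗ξ − Δ(ξ) extended as a graded derivation to U(g)^{⊗2}, and F_{k+1}, F'_{k+1} are the coefficients of t^{k+1}. -/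
/-!
Write `C = F_{K+1} - F'_{K+1}`. Since `F` and `F'` agree below order `K + 1` and have constant
term `1`, for any two ring maps `φ, ψ` the coefficients of `t^{K+1}` in `φ(F) ψ(F)` and
`φ(F') ψ(F')` differ by exactly `φ C + ψ C`. Subtracting the `t^{K+1}`-coefficients of the cocycle
identities `Δ₁(F) ι₁(F) = Δ₂(F) ι₂(F)` and `Δ₁(F') ι₁(F') = Δ₂(F') ι₂(F')` therefore gives
`ι₁ C + Δ₁ C = ι₂ C + Δ₂ C`.
-/

open TensorProduct

namespace PowerSeries

variable {R : Type*} [Ring R]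

theorem coeff_mul_X_pow_self (p : R⟦X⟧) (n : ℕ) : coeff n (p * X ^ n) = constantCoeff p := by
  simpa using coeff_mul_X_pow p n 0

theorem coeff_mul_of_forall_coeff_eq_zero_right (P : R⟦X⟧) {D : R⟦X⟧} {n : ℕ}
    (hD : ∀ m < n, coeff m D = 0) : coeff n (P * D) = constantCoeff P * coeff n D := by
  obtain ⟨E, rfl⟩ := X_pow_dvd_iff.mpr hD
  rw [← (commute_X_pow E n).eq, ← mul_assoc, coeff_mul_X_pow_self, coeff_mul_X_pow_self,
    map_mul]

theorem coeff_mul_of_forall_coeff_eq_zero_left {D : R⟦X⟧} (Q : R⟦X⟧) {n : ℕ}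
    (hD : ∀ m < n, coeff m D = 0) : coeff n (D * Q) = coeff n D * constantCoeff Q := by
  obtain ⟨E, rfl⟩ := X_pow_dvd_iff.mpr hD
  rw [← (commute_X_pow E n).eq, mul_assoc, ← (commute_X_pow Q n).eq, ← mul_assoc,
    coeff_mul_X_pow_self, coeff_mul_X_pow_self, map_mul]

theorem coeff_mul_sub_coeff_mul {P P' Q Q' : R⟦X⟧} {n : ℕ}
    (hP : ∀ m < n, coeff m P = coeff m P') (hQ : ∀ m < n, coeff m Q = coeff m Q') :
    coeff n (P * Q) - coeff n (P' * Q') =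
      constantCoeff P * (coeff n Q - coeff n Q') +
        (coeff n P - coeff n P') * constantCoeff Q' := by
  have hsplit : P * Q - P' * Q' = P * (Q - Q') + (P - P') * Q' := by noncomm_ring
  rw [← map_sub, hsplit, map_add, coeff_mul_of_forall_coeff_eq_zero_right,
    coeff_mul_of_forall_coeff_eq_zero_left, map_sub, map_sub]
  · intro m hm
    rw [map_sub, hP m hm, sub_self]
  · intro m hm
    rw [map_sub, hQ m hm, sub_self]

theorem constantCoeff_map {A : Type*} [Ring A] (χ : A →+* R) (G : A⟦X⟧) :
    constantCoeff (map χ G) = χ (constantCoeff G) := by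
  rw [← coeff_zero_eq_constantCoeff_apply, coeff_map, coeff_zero_eq_constantCoeff_apply]

theorem coeff_map_mul_map_sub_coeff_map_mul_map {A : Type*} [Ring A] (φ ψ : A →+* R)
    {F F' : A⟦X⟧} (hF : constantCoeff F = 1) (hF' : constantCoeff F' = 1) {n : ℕ}
    (hFF' : ∀ m < n, coeff m F = coeff m F') :
    coeff n (map φ F * map ψ F) - coeff n (map φ F' * map ψ F') =
      ψ (coeff n F - coeff n F') + φ (coeff n F - coeff n F') := by
  have hmap (χ : A →+* R) : ∀ m < n, coeff m (map χ F) = coeff m (map χ F') := by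
    intro m hm
    rw [coeff_map, coeff_map, hFF' m hm]
  rw [coeff_mul_sub_coeff_mul (hmap φ) (hmap ψ), constantCoeff_map, constantCoeff_map, hF, hF',
    map_one, map_one, one_mul, mul_one,
    coeff_map, coeff_map, coeff_map, coeff_map, map_sub, map_sub]

end PowerSeries

namespace Stmt13

variable (k : Type*) [Field k] [CharZero k]
  (g : Type*) [LieRing g] [LieAlgebra k g]

local notation "U" => UniversalEnvelopingAlgebra k g

noncomputable def Δ₁ (Δ : U →ₐ[k] U ⊗[k] U) : (U ⊗[k] U) →ₐ[k] (U ⊗[k] U) ⊗[k] U :=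
  Algebra.TensorProduct.map Δ (AlgHom.id k U)

noncomputable def Δ₂ (Δ : U →ₐ[k] U ⊗[k] U) : (U ⊗[k] U) →ₐ[k] (U ⊗[k] U) ⊗[k] U :=
  ((Algebra.TensorProduct.assoc k k k U U U).symm).toAlgHom.comp
    (Algebra.TensorProduct.map (AlgHom.id k U) Δ)

noncomputable def ι₁ : (U ⊗[k] U) →ₐ[k] (U ⊗[k] U) ⊗[k] U :=
  Algebra.TensorProduct.includeLeft

noncomputable def ι₂ : (U ⊗[k] U) →ₐ[k] (U ⊗[k] U) ⊗[k] U :=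
  ((Algebra.TensorProduct.assoc k k k U U U).symm).toAlgHom.comp
    Algebra.TensorProduct.includeRight

noncomputable def ε₁ (ε : U →ₐ[k] k) : (U ⊗[k] U) →ₐ[k] U :=
  (Algebra.TensorProduct.lid k U).toAlgHom.comp
    (Algebra.TensorProduct.map ε (AlgHom.id k U))

noncomputable def ε₂ (ε : U →ₐ[k] k) : (U ⊗[k] U) →ₐ[k] U :=
  (Algebra.TensorProduct.rid k k U).toAlgHom.comp
    (Algebra.TensorProduct.map (AlgHom.id k U) ε)

def IsTwist (Δ : U →ₐ[k] U ⊗[k] U) (ε : U →ₐ[k] k)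
    (F : PowerSeries (U ⊗[k] U)) : Prop :=
  IsUnit F ∧
  PowerSeries.map (Δ₁ k g Δ).toRingHom F * PowerSeries.map (ι₁ k g).toRingHom F
    = PowerSeries.map (Δ₂ k g Δ).toRingHom F * PowerSeries.map (ι₂ k g).toRingHom F ∧
  PowerSeries.map (ε₁ k g ε).toRingHom F = 1 ∧
  PowerSeries.map (ε₂ k g ε).toRingHom F = 1 ∧
  PowerSeries.constantCoeff (R := U ⊗[k] U) F = 1

theorem difference_of_twists_is_closed
    (Δ : U →ₐ[k] U ⊗[k] U)
    (ε : U →ₐ[k] k)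
    (F F' : PowerSeries (U ⊗[k] U))
    (hF : IsTwist k g Δ ε F) (hF' : IsTwist k g Δ ε F')
    (K : ℕ) (hco : ∀ i ≤ K, PowerSeries.coeff (R := U ⊗[k] U) i F
        = PowerSeries.coeff (R := U ⊗[k] U) i F') :
    (let C := PowerSeries.coeff (R := U ⊗[k] U) (K + 1) F
        - PowerSeries.coeff (R := U ⊗[k] U) (K + 1) F'
     ι₁ k g C + Δ₁ k g Δ C = ι₂ k g C + Δ₂ k g Δ C) := by
  obtain ⟨-, hcocycle, -, -, hconst⟩ := hF
  obtain ⟨-, hcocycle', -, -, hconst'⟩ := hF'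
  have hlow : ∀ m < K + 1, PowerSeries.coeff m F = PowerSeries.coeff m F' :=
    fun m hm => hco m (Nat.lt_succ_iff.mp hm)
  have hdiff := PowerSeries.coeff_map_mul_map_sub_coeff_map_mul_map
    (Δ₁ k g Δ).toRingHom (ι₁ k g).toRingHom hconst hconst' hlow
  rw [hcocycle, hcocycle',
    PowerSeries.coeff_map_mul_map_sub_coeff_map_mul_map _ _ hconst hconst' hlow] at hdiff
  exact hdiff.symm
end Stmt13
end
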